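/- Alternative error recursion: Under the triangle-inequality decomposition inf_{w∈Ψ_j} ||C̃_j(z,·) − w|| ≤ ||C̃_j(z,·) − C*_j(z,·)|| + inf_{w∈Ψ_j} ||C*_j(z,·) − w|| (norms in L²(μ_j⊗P_M)), the error recursion of the main proposition becomes E_j ≤ |L|·( ε_{j,M} + √2 · sup_{z∈L} inf_{w∈Ψ_j} ||C*_j(z,·) − w||_{L²(μ_j)} ) + |L|·(1+√2)·E_{j+1}, and if sup_z inf_w ||C*_j(z,·) − w|| ≤ δ and ε_{j,M} ≤ ε for all j, then E_j ≤ (ε + √2 δ)·|L|·(((1+√2)|L|)^{J−j} − 1)/((1+√2)|L| − 1). -/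

import Mathlib

/-!
Write `E'_{j+1}` for the `L²` norm of `sup_z |C̃_j(z,·) − C*_j(z,·)|`, which is at most `E_{j+1}`.
For each `z`, the triangle inequality through `C̃_j(z,·)`, the quasi-projection bound and the
triangle inequality for distances to `Ψ_j` give
`‖Ĉ_j(z,·) − C*_j(z,·)‖ ≤ ε_{j,M} + √2 · d(C*_j(z,·), Ψ_j) + (1 + √2) · E'_{j+1}`,
and the `L²` norm of a supremum over the finite set `L` is at most the sum of the norms, which
produces the factor `|L|`. Unrolling `E_j ≤ a + r E_{j+1}`, `E_J = 0` gives
`E_j ≤ a (1 + r + ⋯ + r^{J-j-1})`, a geometric sum since `r = (1 + √2)|L| ≠ 1`.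
-/

open MeasureTheory

/-- The `L²(ν)`-norm of a real function. -/
noncomputable def l2norm {α : Type*} [MeasurableSpace α] (ν : Measure α) (f : α → ℝ) : ℝ :=
  (eLpNorm f 2 ν).toReal

/-- `E_j := ‖ sup_{z∈L} |Ĉ_j(z,·) − C*_j(z,·)| ‖_{L²(μ_j ⊗ P_M)}` for `j < J`, `E_J = 0`. -/
noncomputable def errSeq {α L : Type*} [MeasurableSpace α] [Fintype L]
    (J : ℕ) (ν : ℕ → Measure α) (Chat Cstar : ℕ → L → α → ℝ) (j : ℕ) : ℝ :=
  if j < J then l2norm (ν j) (fun x => ⨆ z : L, |Chat j z x - Cstar j z x|) else 0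

section Minkowski

variable {α : Type*} [MeasurableSpace α] {μ : Measure α}

/-- Minkowski's inequality needs measurability of only one summand: the `L^q` seminorm of an
arbitrary function is an inner integral, and a measurable minorant of `‖f + g‖ₑ` with the same
integral can be split as `‖f‖ₑ + k` with `k ≤ ‖g‖ₑ` measurable. -/
theorem eLpNorm'_add_le_of_aestronglyMeasurable_left {ε : Type*} [TopologicalSpace ε]
    [ESeminormedAddMonoid ε] {f : α → ε} (hf : AEStronglyMeasurable f μ) (g : α → ε)
    {q : ℝ} (hq : 1 ≤ q) :
    eLpNorm' (f + g) q μ ≤ eLpNorm' f q μ + eLpNorm' g q μ := by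
  have hq0 : 0 < q := by linarith
  obtain ⟨φ, hφ, hφle, hφeq⟩ :=
    exists_measurable_le_lintegral_eq μ (fun a => ‖(f + g) a‖ₑ ^ q)
  set h : α → ENNReal := fun a => φ a ^ q⁻¹
  have h_eq : eLpNorm' (f + g) q μ = eLpNorm' h q μ := by
    simp only [eLpNorm'_eq_lintegral_enorm, enorm_eq_self, h,
      ENNReal.rpow_inv_rpow hq0.ne', hφeq]
  have h_le : ∀ a, h a ≤ ‖f a‖ₑ + ‖g a‖ₑ := fun a =>
    calc h a ≤ (‖(f + g) a‖ₑ ^ q) ^ q⁻¹ := ENNReal.rpow_le_rpow (hφle a) (by positivity)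
      _ = ‖f a + g a‖ₑ := ENNReal.rpow_rpow_inv hq0.ne' _
      _ ≤ ‖f a‖ₑ + ‖g a‖ₑ := enorm_add_le _ _
  set k : α → ENNReal := fun a => h a - ‖f a‖ₑ
  have hfe : AEStronglyMeasurable (fun a => ‖f a‖ₑ) μ := hf.enorm.aestronglyMeasurable
  have hk : AEStronglyMeasurable k μ :=
    ((hφ.pow_const _).aemeasurable.sub hf.enorm).aestronglyMeasurable
  calc eLpNorm' (f + g) q μ = eLpNorm' h q μ := h_eq
    _ ≤ eLpNorm' ((fun a => ‖f a‖ₑ) + k) q μ :=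
        eLpNorm'_mono_enorm_ae hq0.le (.of_forall fun a => le_add_tsub)
    _ ≤ eLpNorm' (fun a => ‖f a‖ₑ) q μ + eLpNorm' k q μ := eLpNorm'_add_le hfe hk hq
    _ ≤ eLpNorm' f q μ + eLpNorm' g q μ := by
        rw [eLpNorm'_enorm]
        exact add_le_add le_rfl (eLpNorm'_mono_enorm_ae hq0.le
          (.of_forall fun a => show ‖k a‖ₑ ≤ ‖g a‖ₑ from tsub_le_iff_left.2 (h_le a)))

theorem eLpNorm_add_le_of_aestronglyMeasurable_left {ε : Type*} [TopologicalSpace ε]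
    [ESeminormedAddMonoid ε] {f : α → ε} (hf : AEStronglyMeasurable f μ) (g : α → ε)
    {p : ENNReal} (hp : 1 ≤ p) (hp_top : p ≠ ⊤) :
    eLpNorm (f + g) p μ ≤ eLpNorm f p μ + eLpNorm g p μ := by
  have hp0 : p ≠ 0 := (lt_of_lt_of_le zero_lt_one hp).ne'
  simp only [eLpNorm_eq_eLpNorm' hp0 hp_top]
  exact eLpNorm'_add_le_of_aestronglyMeasurable_left hf g (ENNReal.toReal_mono hp_top hp)

end Minkowski

section L2

variable {α : Type*} [MeasurableSpace α] {ν : Measure α}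

noncomputable def l2infDist (ν : Measure α) (f : α → ℝ) (Ψ : Set (α → ℝ)) : ℝ :=
  sInf ((fun w => l2norm ν (fun x => f x - w x)) '' Ψ)

theorem l2norm_nonneg (f : α → ℝ) : 0 ≤ l2norm ν f := ENNReal.toReal_nonneg

/-- Since `l2norm` is `0` on functions of infinite norm, one needs that `g` has finite norm
whenever `f + g` does; this follows from Minkowski applied to `-f + (f + g)`. -/
theorem l2norm_add_le {f : α → ℝ} (hf : MemLp f 2 ν) (g : α → ℝ) :
    l2norm ν (f + g) ≤ l2norm ν f + l2norm ν g := by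
  have hfg := eLpNorm_add_le_of_aestronglyMeasurable_left hf.1 g one_le_two
    ENNReal.ofNat_ne_top
  by_cases hsum : eLpNorm (f + g) 2 ν = ⊤
  · rw [l2norm, hsum, ENNReal.toReal_top]
    exact add_nonneg (l2norm_nonneg f) (l2norm_nonneg g)
  have hg : eLpNorm g 2 ν ≠ ⊤ := by
    have h := eLpNorm_add_le_of_aestronglyMeasurable_left hf.neg.1 (f + g) one_le_two
      ENNReal.ofNat_ne_top
    rw [neg_add_cancel_left, eLpNorm_neg] at h
    exact ne_top_of_le_ne_top (ENNReal.add_ne_top.2 ⟨hf.2.ne, hsum⟩) h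
  rw [l2norm, l2norm, l2norm, ← ENNReal.toReal_add hf.2.ne hg]
  exact ENNReal.toReal_mono (ENNReal.add_ne_top.2 ⟨hf.2.ne, hg⟩) hfg

theorem l2norm_sub_le_l2norm_sub_add_l2norm_sub {f g : α → ℝ}
    (hfg : MemLp (fun x => f x - g x) 2 ν) (h : α → ℝ) :
    l2norm ν (fun x => f x - h x) ≤
      l2norm ν (fun x => f x - g x) + l2norm ν (fun x => g x - h x) := by
  have e : (fun x => f x - h x) = (fun x => f x - g x) + (fun x => g x - h x) := by
    ext x; simp
  rw [e]
  exact l2norm_add_le hfg _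

theorem Real.sInf_image_le_add {β : Type*} {s : Set β} {f g : β → ℝ} {c : ℝ}
    (hf : BddBelow (f '' s)) (hc : 0 ≤ c) (h : ∀ w ∈ s, f w ≤ c + g w) :
    sInf (f '' s) ≤ c + sInf (g '' s) := by
  rcases s.eq_empty_or_nonempty with rfl | hs
  · simpa using hc
  have : sInf (f '' s) - c ≤ sInf (g '' s) := by
    refine le_csInf (hs.image g) ?_
    rintro _ ⟨w, hw, rfl⟩
    linarith [csInf_le hf ⟨w, hw, rfl⟩, h w hw]
  linarith

theorem l2infDist_le_l2norm_sub_add_l2infDist {f g : α → ℝ}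
    (hfg : MemLp (fun x => f x - g x) 2 ν) (Ψ : Set (α → ℝ)) :
    l2infDist ν f Ψ ≤ l2norm ν (fun x => f x - g x) + l2infDist ν g Ψ :=
  Real.sInf_image_le_add ⟨0, by rintro _ ⟨w, -, rfl⟩; exact l2norm_nonneg _⟩
    (l2norm_nonneg _) fun w _ => l2norm_sub_le_l2norm_sub_add_l2norm_sub hfg w

theorem l2norm_sub_le_of_quasi_proj {fhat ftil fstar : α → ℝ} {Ψ : Set (α → ℝ)} {e c : ℝ}
    (hc : 0 ≤ c) (hhat : MemLp (fun x => fhat x - ftil x) 2 ν)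
    (htil : MemLp (fun x => ftil x - fstar x) 2 ν)
    (hproj : l2norm ν (fun x => fhat x - ftil x) ≤ e + c * l2infDist ν ftil Ψ) :
    l2norm ν (fun x => fhat x - fstar x) ≤
      e + c * l2infDist ν fstar Ψ + (1 + c) * l2norm ν (fun x => ftil x - fstar x) := by
  have h_tri := l2norm_sub_le_l2norm_sub_add_l2norm_sub hhat fstar
  have h_dist := mul_le_mul_of_nonneg_left (l2infDist_le_l2norm_sub_add_l2infDist htil Ψ) hc
  linarith

variable {L : Type*} [Fintype L]

theorem eLpNorm_iSup_abs_le_sum {d : L → α → ℝ} (hd : ∀ z, AEStronglyMeasurable (d z) ν)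
    {p : ENNReal} (hp : 1 ≤ p) :
    eLpNorm (fun x => ⨆ z, |d z x|) p ν ≤ ∑ z, eLpNorm (d z) p ν :=
  calc eLpNorm (fun x => ⨆ z, |d z x|) p ν ≤ eLpNorm (∑ z, fun x => |d z x|) p ν := by
        refine eLpNorm_mono_real fun x => ?_
        rw [Real.norm_of_nonneg (Real.iSup_nonneg fun z => abs_nonneg _), Finset.sum_apply]
        exact Real.iSup_le (fun z => Finset.single_le_sum (fun i _ => abs_nonneg (d i x))
          (Finset.mem_univ z)) (Finset.sum_nonneg fun i _ => abs_nonneg _)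
    _ ≤ ∑ z, eLpNorm (fun x => |d z x|) p ν := eLpNorm_sum_le (fun z _ => (hd z).norm) hp
    _ = ∑ z, eLpNorm (d z) p ν := by simp_rw [← Real.norm_eq_abs, eLpNorm_norm]

theorem l2norm_iSup_abs_le_sum {d : L → α → ℝ} (hd : ∀ z, MemLp (d z) 2 ν) :
    l2norm ν (fun x => ⨆ z, |d z x|) ≤ ∑ z, l2norm ν (d z) := by
  unfold l2norm
  rw [← ENNReal.toReal_sum fun z _ => (hd z).2.ne]
  exact ENNReal.toReal_mono (ENNReal.sum_ne_top.2 fun z _ => (hd z).2.ne)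
    (eLpNorm_iSup_abs_le_sum (fun z => (hd z).1) one_le_two)

theorem l2norm_le_l2norm_iSup_abs {d : L → α → ℝ} (hd : ∀ z, MemLp (d z) 2 ν) (z : L) :
    l2norm ν (d z) ≤ l2norm ν (fun x => ⨆ z, |d z x|) :=
  ENNReal.toReal_mono
    (ne_top_of_le_ne_top (ENNReal.sum_ne_top.2 fun z _ => (hd z).2.ne)
      (eLpNorm_iSup_abs_le_sum (fun z => (hd z).1) one_le_two))
    (eLpNorm_mono_real fun x =>
      (Real.norm_eq_abs _).le.trans
        (le_ciSup (Set.finite_range fun z => |d z x|).bddAbove z))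

end L2

theorem errSeq_le_of_quasi_proj {α L : Type*} [MeasurableSpace α] [Fintype L]
    {J : ℕ} {ν : ℕ → Measure α} {Chat Ctil Cstar : ℕ → L → α → ℝ} {Ψ : ℕ → Set (α → ℝ)}
    {εs : ℕ → ℝ} {j : ℕ} (hj : j < J)
    (hL2Chat : ∀ z, MemLp (Chat j z) 2 (ν j)) (hL2Ctil : ∀ z, MemLp (Ctil j z) 2 (ν j))
    (hL2Cstar : ∀ z, MemLp (Cstar j z) 2 (ν j))
    (hproj : ∀ z, l2norm (ν j) (fun x => Chat j z x - Ctil j z x) ≤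
      εs j + Real.sqrt 2 * l2infDist (ν j) (Ctil j z) (Ψ j))
    (hprop : l2norm (ν j) (fun x => ⨆ z, |Ctil j z x - Cstar j z x|) ≤
      errSeq J ν Chat Cstar (j + 1)) :
    errSeq J ν Chat Cstar j ≤
      (Fintype.card L : ℝ) * (εs j + Real.sqrt 2 * ⨆ z, l2infDist (ν j) (Cstar j z) (Ψ j)) +
        (Fintype.card L : ℝ) * (1 + Real.sqrt 2) * errSeq J ν Chat Cstar (j + 1) := by
  have hsqrt : 0 ≤ Real.sqrt 2 := Real.sqrt_nonneg 2
  have hz : ∀ z, l2norm (ν j) (fun x => Chat j z x - Cstar j z x) ≤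
      εs j + Real.sqrt 2 * (⨆ z, l2infDist (ν j) (Cstar j z) (Ψ j)) +
        (1 + Real.sqrt 2) * errSeq J ν Chat Cstar (j + 1) := by
    intro z
    have hdist : l2infDist (ν j) (Cstar j z) (Ψ j) ≤ ⨆ z, l2infDist (ν j) (Cstar j z) (Ψ j) :=
      le_ciSup (Set.finite_range fun z => l2infDist (ν j) (Cstar j z) (Ψ j)).bddAbove z
    have htil : l2norm (ν j) (fun x => Ctil j z x - Cstar j z x) ≤
        errSeq J ν Chat Cstar (j + 1) :=
      (l2norm_le_l2norm_iSup_abs (fun z => (hL2Ctil z).sub (hL2Cstar z)) z).trans hprop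
    calc l2norm (ν j) (fun x => Chat j z x - Cstar j z x)
        ≤ εs j + Real.sqrt 2 * l2infDist (ν j) (Cstar j z) (Ψ j) +
            (1 + Real.sqrt 2) * l2norm (ν j) (fun x => Ctil j z x - Cstar j z x) :=
          l2norm_sub_le_of_quasi_proj hsqrt ((hL2Chat z).sub (hL2Ctil z))
            ((hL2Ctil z).sub (hL2Cstar z)) (hproj z)
      _ ≤ _ := by gcongr
  calc errSeq J ν Chat Cstar j
      = l2norm (ν j) (fun x => ⨆ z, |Chat j z x - Cstar j z x|) := if_pos hj
    _ ≤ ∑ z, l2norm (ν j) (fun x => Chat j z x - Cstar j z x) :=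
        l2norm_iSup_abs_le_sum fun z => (hL2Chat z).sub (hL2Cstar z)
    _ ≤ ∑ _z : L, (εs j + Real.sqrt 2 * (⨆ z, l2infDist (ν j) (Cstar j z) (Ψ j)) +
          (1 + Real.sqrt 2) * errSeq J ν Chat Cstar (j + 1)) :=
        Finset.sum_le_sum fun z _ => hz z
    _ = _ := by rw [Finset.sum_const, Finset.card_univ, nsmul_eq_mul]; ring

theorem le_mul_geom_sum_of_le_add_mul {E : ℕ → ℝ} {J : ℕ} {a r : ℝ} (hr : 0 ≤ r)
    (hJ : E J ≤ 0) (hE : ∀ j < J, E j ≤ a + r * E (j + 1)) {j : ℕ} (hj : j ≤ J) :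
    E j ≤ a * ∑ i ∈ Finset.range (J - j), r ^ i := by
  induction h : J - j generalizing j with
  | zero =>
    obtain rfl : j = J := by omega
    simpa using hJ
  | succ n ih =>
    calc E j ≤ a + r * E (j + 1) := hE j (by omega)
      _ ≤ a + r * (a * ∑ i ∈ Finset.range n, r ^ i) := by
          gcongr; exact ih (by omega) (by omega)
      _ = a * ∑ i ∈ Finset.range (n + 1), r ^ i := by rw [geom_sum_succ]; ring

theorem alternative_error_recursion_general
    {α L : Type*} [MeasurableSpace α] [Fintype L] [Nonempty L]
    (J : ℕ) (ν : ℕ → Measure α)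
    (Chat Ctil Cstar : ℕ → L → α → ℝ)
    (Ψ : ℕ → Set (α → ℝ))
    (εs : ℕ → ℝ) (ε δ : ℝ)
    (hL2Chat : ∀ j z, MemLp (Chat j z) 2 (ν j))
    (hL2Ctil : ∀ j z, MemLp (Ctil j z) 2 (ν j))
    (hL2Cstar : ∀ j z, MemLp (Cstar j z) 2 (ν j))
    (hproj : ∀ j, j < J → ∀ z : L,
      l2norm (ν j) (fun x => Chat j z x - Ctil j z x) ≤
        εs j + Real.sqrt 2 *
          sInf ((fun w => l2norm (ν j) (fun x => Ctil j z x - w x)) '' Ψ j))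
    (hprop : ∀ j, j + 1 ≤ J →
      l2norm (ν j) (fun x => ⨆ z : L, |Ctil j z x - Cstar j z x|) ≤
        errSeq J ν Chat Cstar (j + 1))
    (hδbound : ∀ j, j < J → ∀ z : L,
      sInf ((fun w => l2norm (ν j) (fun x => Cstar j z x - w x)) '' Ψ j) ≤ δ)
    (hεbound : ∀ j, j < J → εs j ≤ ε) :
    (∀ j, j < J →
      errSeq J ν Chat Cstar j ≤
        (Fintype.card L : ℝ) * (εs j + Real.sqrt 2 *
            ⨆ z : L, sInf ((fun w => l2norm (ν j) (fun x => Cstar j z x - w x)) '' Ψ j)) +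
          (Fintype.card L : ℝ) * (1 + Real.sqrt 2) * errSeq J ν Chat Cstar (j + 1)) ∧
    (∀ j, j ≤ J →
      errSeq J ν Chat Cstar j ≤
        (ε + Real.sqrt 2 * δ) * (Fintype.card L : ℝ) *
          ((((1 + Real.sqrt 2) * (Fintype.card L : ℝ)) ^ (J - j) - 1) /
            ((1 + Real.sqrt 2) * (Fintype.card L : ℝ) - 1))) := by
  have hstep := fun j (hj : j < J) => errSeq_le_of_quasi_proj hj (hL2Chat j) (hL2Ctil j)
    (hL2Cstar j) (hproj j hj) (hprop j hj)
  refine ⟨hstep, fun j hj => ?_⟩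
  have hK : (1 : ℝ) ≤ Fintype.card L := by exact_mod_cast Fintype.card_pos
  have hsqrt : 0 < Real.sqrt 2 := by positivity
  have hr : (1 + Real.sqrt 2) * (Fintype.card L : ℝ) ≠ 1 := by nlinarith
  rw [← geom_sum_eq hr]
  refine le_mul_geom_sum_of_le_add_mul (by positivity) (by simp [errSeq])
    (fun i hi => (hstep i hi).trans ?_) hj
  have hbound : (Fintype.card L : ℝ) * (εs i + Real.sqrt 2 *
      ⨆ z, l2infDist (ν i) (Cstar i z) (Ψ i)) ≤ (Fintype.card L : ℝ) * (ε + Real.sqrt 2 * δ) := by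
    gcongr
    exacts [hεbound i hi, ciSup_le (hδbound i hi)]
  linarith

/-- **Alternative error recursion**: under the hypotheses of the main error-propagation
proposition, the triangle-inequality decomposition
`inf_{w∈Ψ_j} ‖C̃_j(z,·) − w‖ ≤ ‖C̃_j(z,·) − C*_j(z,·)‖ + inf_{w∈Ψ_j} ‖C*_j(z,·) − w‖`
yields the recursion
`E_j ≤ |L|·(ε_{j,M} + √2·sup_z inf_{w∈Ψ_j} ‖C*_j(z,·) − w‖) + |L|·(1+√2)·E_{j+1}`,
and if moreover `sup_z inf_w ‖C*_j(z,·) − w‖ ≤ δ` and `ε_{j,M} ≤ ε` for all `j`, then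
`E_j ≤ (ε + √2 δ)·|L|·(((1+√2)|L|)^{J−j} − 1)/((1+√2)|L| − 1)` for all `j ≤ J`. -/
theorem alternative_error_recursion
    {α L : Type*} [MeasurableSpace α] [Fintype L] [Nonempty L]
    (J : ℕ) (ν : ℕ → Measure α)
    (Chat Ctil Cstar : ℕ → L → α → ℝ)
    (Ψ : ℕ → Set (α → ℝ)) (hΨ : ∀ j, (Ψ j).Nonempty)
    (εs : ℕ → ℝ) (ε δ : ℝ) (hε : 0 ≤ ε) (hδ : 0 ≤ δ)
    (hL : 2 ≤ Fintype.card L)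
    (hmChat : ∀ j z, Measurable (Chat j z))
    (hmCtil : ∀ j z, Measurable (Ctil j z))
    (hmCstar : ∀ j z, Measurable (Cstar j z))
    (hL2Chat : ∀ j z, MemLp (Chat j z) 2 (ν j))
    (hL2Ctil : ∀ j z, MemLp (Ctil j z) 2 (ν j))
    (hL2Cstar : ∀ j z, MemLp (Cstar j z) 2 (ν j))
    (hproj : ∀ j, j < J → ∀ z : L,
      l2norm (ν j) (fun x => Chat j z x - Ctil j z x) ≤
        εs j + Real.sqrt 2 *
          sInf ((fun w => l2norm (ν j) (fun x => Ctil j z x - w x)) '' Ψ j))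
    (hprop : ∀ j, j + 1 ≤ J →
      l2norm (ν j) (fun x => ⨆ z : L, |Ctil j z x - Cstar j z x|) ≤
        errSeq J ν Chat Cstar (j + 1))
    (hδbound : ∀ j, j < J → ∀ z : L,
      sInf ((fun w => l2norm (ν j) (fun x => Cstar j z x - w x)) '' Ψ j) ≤ δ)
    (hεbound : ∀ j, j < J → εs j ≤ ε) :
    (∀ j, j < J →
      errSeq J ν Chat Cstar j ≤
        (Fintype.card L : ℝ) * (εs j + Real.sqrt 2 *
            ⨆ z : L, sInf ((fun w => l2norm (ν j) (fun x => Cstar j z x - w x)) '' Ψ j)) +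
          (Fintype.card L : ℝ) * (1 + Real.sqrt 2) * errSeq J ν Chat Cstar (j + 1)) ∧
    (∀ j, j ≤ J →
      errSeq J ν Chat Cstar j ≤
        (ε + Real.sqrt 2 * δ) * (Fintype.card L : ℝ) *
          ((((1 + Real.sqrt 2) * (Fintype.card L : ℝ)) ^ (J - j) - 1) /
            ((1 + Real.sqrt 2) * (Fintype.card L : ℝ) - 1))) :=
  alternative_error_recursion_general J ν Chat Ctil Cstar Ψ εs ε δ hL2Chat hL2Ctil hL2Cstar hproj
    hprop hδbound hεbound
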